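/- Let Δ be the root system of a complex simple Lie algebra with base of simple roots Δ⁰, and let Σ ⊆ Δ⁰ be a nonempty subset containing a root ζ which is adjacent in the Dynkin diagram to every other root of Σ. If α ∈ Σ∖{ζ} and β ∈ Υ¹_α, then ζ + β is a root. -/

import Mathlib

open scoped RealInnerProductSpace BigOperators Classical

/-- A reduced crystallographic root system in a real inner product space,
together with a chosen base of simple roots and the coordinates of each
root with respect to the base. -/
structure RootSystemBase (V : Type*) [NormedAddCommGroup V] [InnerProductSpace ℝ V] where
  /-- the set of roots -/
  Δ : Finset V
  /-- the set of simple roots (the base) -/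
  Δ0 : Finset V
  base_sub : Δ0 ⊆ Δ
  ne_zero : ∀ β ∈ Δ, β ≠ (0 : V)
  indep : LinearIndependent ℝ (fun a : ↥Δ0 => (a : V))
  neg_mem : ∀ β ∈ Δ, -β ∈ Δ
  /-- `coeff β α` is the coefficient `n_α` of the simple root `α` in `β = ∑ n_α • α` -/
  coeff : V → V → ℤ
  coeff_spec : ∀ β ∈ Δ, β = ∑ α ∈ Δ0, (coeff β α : ℝ) • α
  coeff_sign : ∀ β ∈ Δ, (∀ α ∈ Δ0, 0 ≤ coeff β α) ∨ (∀ α ∈ Δ0, coeff β α ≤ 0)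
  crystal : ∀ α ∈ Δ, ∀ β ∈ Δ, ∃ k : ℤ, 2 * ⟪β, α⟫ / ⟪α, α⟫ = (k : ℝ)
  reflect_mem : ∀ α ∈ Δ, ∀ β ∈ Δ, β - (2 * ⟪β, α⟫ / ⟪α, α⟫) • α ∈ Δ
  reduced : ∀ α ∈ Δ, (2 : ℝ) • α ∉ Δ

namespace RootSystemBase

variable {V : Type*} [NormedAddCommGroup V] [InnerProductSpace ℝ V]

variable (R : RootSystemBase V)

/-- The height `ht_Σ(β)` of a root `β` relative to a subset `Sg` of the simple roots. -/
def ht (Sg : Finset V) (β : V) : ℤ := ∑ α ∈ Sg, R.coeff β α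

/-- positive roots -/
def IsPos (β : V) : Prop := β ∈ R.Δ ∧ ∀ α ∈ R.Δ0, 0 ≤ R.coeff β α

/-- negative roots -/
def IsNeg (β : V) : Prop := β ∈ R.Δ ∧ ∀ α ∈ R.Δ0, R.coeff β α ≤ 0

/-- Irreducibility of the root system (the Dynkin diagram is connected); this is
equivalent to the corresponding complex Lie algebra being simple. -/
def Irred : Prop :=
  ¬ ∃ S : Finset V, S ⊆ R.Δ0 ∧ S.Nonempty ∧ S ≠ R.Δ0 ∧
      ∀ a ∈ S, ∀ b ∈ R.Δ0, b ∉ S → ⟪a, b⟫ = 0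

/-- Adjacency of two (simple) roots in the Dynkin diagram. -/
def Adj (a b : V) : Prop := a ≠ b ∧ ⟪a, b⟫ ≠ 0

end RootSystemBase

namespace RootSystemBase

variable {V : Type*} [NormedAddCommGroup V] [InnerProductSpace ℝ V]

variable (R : RootSystemBase V)

/-- `R.comp ζ α` is the connected component containing `α` of the Dynkin diagram of
`Δ⁰ ∖ {ζ}`:  all simple roots `γ ≠ ζ` joined to `α` by a path of adjacent simple
roots avoiding `ζ`. -/
def comp (ζ α : V) : Set V :=
  {γ : V | γ ∈ R.Δ0 ∧ γ ≠ ζ ∧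
    Relation.ReflTransGen
      (fun u w => u ∈ R.Δ0 ∧ w ∈ R.Δ0 ∧ u ≠ ζ ∧ w ≠ ζ ∧ Adj u w) α γ}

/-- `Υ¹_α`: the roots of the form `β = α + ∑ nᵢ βᵢ` with `βᵢ ∈ Υ_α ∖ {α}` and
`nᵢ > 0` (`m ≥ 0` summands); equivalently the roots of `{α}`-height one in the
subsystem with simple roots `Υ_α`. -/
def Ups1 (ζ α : V) : Set V :=
  {β : V | β ∈ R.Δ ∧ ∃ n : V → ℕ,
      (∀ γ : V, n γ ≠ 0 → γ ∈ R.comp ζ α ∧ γ ≠ α) ∧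
      β = α + ∑ γ ∈ R.Δ0, (n γ : ℝ) • γ}

end RootSystemBase

/-!
Since `α` and `ζ` are adjacent and every simple root occurring in `β - α` lies in `Υ_α`, hence
differs from `ζ`, the root `β` has negative inner product with `ζ` (distinct simple roots form an
obtuse angle). For two non-proportional roots `a, b` with `⟪a, b⟫ > 0` the Cartan integers
`2⟪a, b⟫/⟪b, b⟫` and `2⟪a, b⟫/⟪a, a⟫` are positive with product `< 4`, so one of them is `1`
and a reflection produces `±(a - b)`. Applied to `a = β`, `b = -ζ` this gives `ζ + β ∈ Δ`.
-/

namespace RootSystemBase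

variable {V : Type*} [NormedAddCommGroup V] [InnerProductSpace ℝ V] (R : RootSystemBase V)

lemma eq_of_sum_smul_eq {c d : V → ℝ} (h : ∑ γ ∈ R.Δ0, c γ • γ = ∑ γ ∈ R.Δ0, d γ • γ)
    {γ : V} (hγ : γ ∈ R.Δ0) : c γ = d γ := by
  refine Fintype.linearIndependent_iffₛ.mp R.indep (fun i => c i) (fun i => d i) ?_ ⟨γ, hγ⟩
  simpa only [Finset.sum_coe_sort R.Δ0 (fun γ => c γ • γ),
    Finset.sum_coe_sort R.Δ0 (fun γ => d γ • γ)] using h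

lemma coeff_eq_of_eq_sum {β : V} (hβ : β ∈ R.Δ) {c : V → ℝ} (h : β = ∑ γ ∈ R.Δ0, c γ • γ)
    {γ : V} (hγ : γ ∈ R.Δ0) : (R.coeff β γ : ℝ) = c γ :=
  R.eq_of_sum_smul_eq ((R.coeff_spec β hβ).symm.trans h) hγ

lemma coeff_of_mem_Δ0 {a γ : V} (ha : a ∈ R.Δ0) (hγ : γ ∈ R.Δ0) :
    R.coeff a γ = if γ = a then 1 else 0 := by
  have h := R.coeff_eq_of_eq_sum (R.base_sub ha) (c := fun γ => if γ = a then 1 else 0)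
    (by simp [ite_smul, ha]) hγ
  exact_mod_cast h

lemma coeff_neg {β γ : V} (hβ : β ∈ R.Δ) (hγ : γ ∈ R.Δ0) :
    R.coeff (-β) γ = -R.coeff β γ := by
  have h := R.coeff_eq_of_eq_sum (R.neg_mem β hβ) (c := fun γ => -(R.coeff β γ : ℝ))
    (by simp only [neg_smul, Finset.sum_neg_distrib, ← R.coeff_spec β hβ]) hγ
  exact_mod_cast h

lemma coeff_sub {a b γ : V} (ha : a ∈ R.Δ) (hb : b ∈ R.Δ) (hab : a - b ∈ R.Δ)
    (hγ : γ ∈ R.Δ0) : R.coeff (a - b) γ = R.coeff a γ - R.coeff b γ := by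
  have h := R.coeff_eq_of_eq_sum hab (c := fun γ => (R.coeff a γ : ℝ) - R.coeff b γ)
    (by simp only [sub_smul, Finset.sum_sub_distrib, ← R.coeff_spec a ha, ← R.coeff_spec b hb])
    hγ
  exact_mod_cast h

lemma not_sameRay_of_coeff {a b γ : V} (ha : a ∈ R.Δ) (hb : b ∈ R.Δ) (hγ : γ ∈ R.Δ0)
    (ha_pos : 0 < R.coeff a γ) (hb_nonpos : R.coeff b γ ≤ 0) : ¬SameRay ℝ a b := by
  intro hab
  obtain ⟨r, s, hr, hs, hrs⟩ := hab.exists_pos (R.ne_zero a ha) (R.ne_zero b hb)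
  have key : r * R.coeff a γ = s * R.coeff b γ := by
    refine R.eq_of_sum_smul_eq (c := fun γ => r * R.coeff a γ) (d := fun γ => s * R.coeff b γ)
      ?_ hγ
    simpa only [mul_smul, ← Finset.smul_sum, ← R.coeff_spec a ha, ← R.coeff_spec b hb] using hrs
  have hlhs : 0 < r * (R.coeff a γ : ℝ) := mul_pos hr (by exact_mod_cast ha_pos)
  have hrhs : s * (R.coeff b γ : ℝ) ≤ 0 :=
    mul_nonpos_of_nonneg_of_nonpos hs.le (by exact_mod_cast hb_nonpos)
  linarith

lemma sub_mem_of_inner_pos {a b : V} (ha : a ∈ R.Δ) (hb : b ∈ R.Δ) (hpos : 0 < ⟪a, b⟫)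
    (hray : ¬SameRay ℝ a b) : a - b ∈ R.Δ := by
  have haa : 0 < ⟪a, a⟫ := real_inner_self_pos.mpr (R.ne_zero a ha)
  have hbb : 0 < ⟪b, b⟫ := real_inner_self_pos.mpr (R.ne_zero b hb)
  obtain ⟨k, hk⟩ := R.crystal b hb a ha
  obtain ⟨l, hl⟩ := R.crystal a ha b hb
  rw [real_inner_comm] at hl
  have hk_pos : (0 : ℝ) < k := hk ▸ by positivity
  have hl_pos : (0 : ℝ) < l := hl ▸ by positivity
  have hCS : ⟪a, b⟫ * ⟪a, b⟫ < ⟪a, a⟫ * ⟪b, b⟫ := by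
    have h := inner_lt_norm_mul_iff_real.mpr fun h => hray (sameRay_iff_norm_smul_eq.mpr h.symm)
    rw [real_inner_self_eq_norm_mul_norm, real_inner_self_eq_norm_mul_norm]
    nlinarith
  have hkl : (k : ℝ) * l < 4 := by
    rw [← hk, ← hl, div_mul_div_comm, div_lt_iff₀ (by positivity)]
    linarith
  obtain rfl | rfl : k = 1 ∨ l = 1 := by
    have : 0 < k := by exact_mod_cast hk_pos
    have : 0 < l := by exact_mod_cast hl_pos
    have : k * l < 4 := by exact_mod_cast hkl
    by_contra! h
    have : 2 ≤ k := by omega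
    have : 2 ≤ l := by omega
    nlinarith
  · have h := R.reflect_mem b hb a ha
    rwa [hk, Int.cast_one, one_smul] at h
  · have h := R.neg_mem _ (R.reflect_mem a ha b hb)
    rwa [real_inner_comm, hl, Int.cast_one, one_smul, neg_sub] at h

lemma inner_nonpos_of_mem_Δ0 {a b : V} (ha : a ∈ R.Δ0) (hb : b ∈ R.Δ0) (hab : a ≠ b) :
    ⟪a, b⟫ ≤ 0 := by
  by_contra! hpos
  have ha' := R.base_sub ha
  have hb' := R.base_sub hb
  have hray := R.not_sameRay_of_coeff ha' hb' ha (by simp [R.coeff_of_mem_Δ0 ha ha])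
    (by simp [R.coeff_of_mem_Δ0 hb ha, hab])
  have hsub := R.sub_mem_of_inner_pos ha' hb' hpos hray
  have hcoeff_a : R.coeff (a - b) a = 1 := by
    simp [R.coeff_sub ha' hb' hsub ha, R.coeff_of_mem_Δ0 ha ha, R.coeff_of_mem_Δ0 hb ha, hab]
  have hcoeff_b : R.coeff (a - b) b = -1 := by
    simp [R.coeff_sub ha' hb' hsub hb, R.coeff_of_mem_Δ0 ha hb, R.coeff_of_mem_Δ0 hb hb,
      hab.symm]
  rcases R.coeff_sign _ hsub with h | h
  · linarith [h b hb]
  · linarith [h a ha]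

lemma coeff_of_mem_Ups1 {ζ α β : V} (hα : α ∈ R.Δ0) (hβ : β ∈ R.Ups1 ζ α) :
    R.coeff β α = 1 := by
  obtain ⟨hβΔ, n, hn, hβ_eq⟩ := hβ
  have hnα : n α = 0 := by
    by_contra h
    exact (hn α h).2 rfl
  have h := R.coeff_eq_of_eq_sum hβΔ (c := fun γ => (if γ = α then 1 else 0) + (n γ : ℝ))
    (by simp [hβ_eq, add_smul, Finset.sum_add_distrib, ite_smul, hα]) hα
  simp only [if_pos, hnα, Nat.cast_zero, add_zero] at h
  exact_mod_cast h

lemma inner_lt_zero_of_mem_Ups1 {ζ α β : V} (hζ : ζ ∈ R.Δ0) (hαζ : ⟪α, ζ⟫ < 0)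
    (hβ : β ∈ R.Ups1 ζ α) : ⟪β, ζ⟫ < 0 := by
  obtain ⟨-, n, hn, rfl⟩ := hβ
  have hsum : ∑ γ ∈ R.Δ0, ⟪(n γ : ℝ) • γ, ζ⟫ ≤ 0 := by
    refine Finset.sum_nonpos fun γ _ => ?_
    rw [real_inner_smul_left]
    by_cases hnγ : n γ = 0
    · simp [hnγ]
    · obtain ⟨⟨hγ, hγζ, -⟩, -⟩ := hn γ hnγ
      exact mul_nonpos_of_nonneg_of_nonpos (by positivity) (R.inner_nonpos_of_mem_Δ0 hγ hζ hγζ)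
  rw [inner_add_left, sum_inner]
  linarith

end RootSystemBase

theorem statement8_general {V : Type*} [NormedAddCommGroup V] [InnerProductSpace ℝ V]
    (R : RootSystemBase V)
    (Sg : Finset V) (hSg : Sg ⊆ R.Δ0)
    (ζ : V) (hζ : ζ ∈ Sg) (hadj : ∀ a ∈ Sg, a ≠ ζ → RootSystemBase.Adj ζ a)
    (α : V) (hα : α ∈ Sg) (hαζ : α ≠ ζ)
    (β : V) (hβ : β ∈ R.Ups1 ζ α) :
    ζ + β ∈ R.Δ := by
  have hζ0 : ζ ∈ R.Δ0 := hSg hζ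
  have hα0 : α ∈ R.Δ0 := hSg hα
  have hαζ_neg : ⟪α, ζ⟫ < 0 :=
    (R.inner_nonpos_of_mem_Δ0 hα0 hζ0 hαζ).lt_of_ne
      (by rw [real_inner_comm]; exact (hadj α hα hαζ).2)
  have hnegζ : -ζ ∈ R.Δ := R.neg_mem ζ (R.base_sub hζ0)
  have hray : ¬SameRay ℝ β (-ζ) :=
    R.not_sameRay_of_coeff hβ.1 hnegζ hα0 (by rw [R.coeff_of_mem_Ups1 hα0 hβ]; norm_num)
      (by simp [R.coeff_neg (R.base_sub hζ0) hα0, R.coeff_of_mem_Δ0 hζ0 hα0, hαζ])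
  have hpos : 0 < ⟪β, -ζ⟫ := by
    rw [inner_neg_right]
    linarith [R.inner_lt_zero_of_mem_Ups1 hζ0 hαζ_neg hβ]
  simpa [add_comm] using R.sub_mem_of_inner_pos hβ.1 hnegζ hpos hray

/-- Let `Δ` be the root system of a complex simple Lie algebra with
base `Δ⁰`, and let `Σ ⊆ Δ⁰` be nonempty with a root `ζ` adjacent to every other root
of `Σ`.  If `α ∈ Σ∖{ζ}` and `β ∈ Υ¹_α`, then `ζ + β` is a root. -/
theorem statement8 {V : Type*} [NormedAddCommGroup V] [InnerProductSpace ℝ V]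
    (R : RootSystemBase V) (hirr : R.Irred)
    (Sg : Finset V) (hSg : Sg ⊆ R.Δ0)
    (ζ : V) (hζ : ζ ∈ Sg) (hadj : ∀ a ∈ Sg, a ≠ ζ → RootSystemBase.Adj ζ a)
    (α : V) (hα : α ∈ Sg) (hαζ : α ≠ ζ)
    (β : V) (hβ : β ∈ R.Ups1 ζ α) :
    ζ + β ∈ R.Δ :=
  statement8_general R Sg hSg ζ hζ hadj α hα hαζ β hβ
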